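/- For every real x with 0 < x < 1, β₂(1/x) - β₃(1/x) = (x²/2) ∑_{n≥1} ((1-3x)/(n+x) + 2(1+6x)/(n+2x) - 3(1+3x)/(n+3x)) > 0; in particular β₂(ℓ) > β₃(ℓ) for every integer ℓ ≥ 2. -/

import Mathlib

/-- The digamma function `ψ(x) = Γ'(x)/Γ(x)`. -/
noncomputable def digamma (x : ℝ) : ℝ := deriv Real.Gamma x / Real.Gamma x

/-- `g₂(x) = 3/2 - γ - ψ(x+1) - 2x(ψ(2x) - ψ(x))`. -/
noncomputable def g2 (x : ℝ) : ℝ :=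
  3 / 2 - Real.eulerMascheroniConstant - digamma (x + 1)
    - 2 * x * (digamma (2 * x) - digamma x)

/-- `g₃(x) = 2 - γ - ψ(x+1) + (x/2)(5-3x)ψ(x) - x(1-6x)ψ(2x) - (3x/2)(1+3x)ψ(3x)`. -/
noncomputable def g3 (x : ℝ) : ℝ :=
  2 - Real.eulerMascheroniConstant - digamma (x + 1)
    + x / 2 * (5 - 3 * x) * digamma x
    - x * (1 - 6 * x) * digamma (2 * x)
    - 3 * x / 2 * (1 + 3 * x) * digamma (3 * x)

/-- `β₁(ℓ) = (1/ℓ)(-γ - ψ(1/ℓ))`. -/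
noncomputable def beta1 (l : ℝ) : ℝ :=
  1 / l * (-Real.eulerMascheroniConstant - digamma (1 / l))

/-- `β₂(ℓ) = (1/ℓ)[1 - γ - (1 - 2/ℓ)ψ(1/ℓ) - (2/ℓ)ψ(2/ℓ)]`. -/
noncomputable def beta2 (l : ℝ) : ℝ :=
  1 / l * (1 - Real.eulerMascheroniConstant - (1 - 2 / l) * digamma (1 / l)
    - 2 / l * digamma (2 / l))

/-- `β₃(ℓ) = (1/ℓ)[3/2 - γ - (1 - 3/(2ℓ))(1 - 1/ℓ)ψ(1/ℓ) - (1/ℓ)(1 - 6/ℓ)ψ(2/ℓ)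
  - (3/(2ℓ))(1 + 3/ℓ)ψ(3/ℓ)]`. -/
noncomputable def beta3 (l : ℝ) : ℝ :=
  1 / l * (3 / 2 - Real.eulerMascheroniConstant
    - (1 - 3 / (2 * l)) * (1 - 1 / l) * digamma (1 / l)
    - 1 / l * (1 - 6 / l) * digamma (2 / l)
    - 3 / (2 * l) * (1 + 3 / l) * digamma (3 / l))

/-!
`log Γ` is convex on `(0, ∞)`, so `ψ` is increasing there. Squeezing `ψ(x + 1 + n)` between
`ψ(n + 1) = -γ + Hₙ` and `ψ(n + ⌈x⌉ + 1) = -γ + H_{n+⌈x⌉}` gives the series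
`ψ(x + 1) + γ = ∑ₙ (1/(n+1) - 1/(n+1+x))` for `x ≥ 0`. The coefficients `1 - 3x`, `2(1 + 6x)` and
`-3(1 + 3x)` sum to zero, so the series of the theorem is a combination of differences of two such
series, and with `ψ(y + 1) = ψ(y) + 1/y` its value times `x²/2` is `β₂(1/x) - β₃(1/x)`.
Positivity holds termwise: the `n`-th summand is
`x (4(n+1) + 6(n+1)x + 6x) / ((n+1+x)(n+1+2x)(n+1+3x))`.
-/

open Real Filter Topology Set

lemma differentiableAt_Gamma_of_pos {x : ℝ} (hx : 0 < x) : DifferentiableAt ℝ Gamma x :=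
  differentiableAt_Gamma fun m => ((neg_nonpos.mpr m.cast_nonneg).trans_lt hx).ne'

lemma digamma_eq_deriv_log_Gamma {x : ℝ} (hx : 0 < x) :
    digamma x = deriv (log ∘ Gamma) x := by
  rw [Function.comp_def, deriv.log (differentiableAt_Gamma_of_pos hx) (Gamma_pos_of_pos hx).ne',
    digamma]

lemma digamma_monotoneOn : MonotoneOn digamma (Ioi 0) := by
  refine convexOn_log_Gamma.monotoneOn_deriv (fun x hx => ?_) |>.congr
    fun x hx => (digamma_eq_deriv_log_Gamma hx).symm
  exact (differentiableAt_Gamma_of_pos hx).log (Gamma_pos_of_pos hx).ne'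

lemma digamma_add_one {x : ℝ} (hx : 0 < x) : digamma (x + 1) = digamma x + 1 / x := by
  have hdiff : DifferentiableAt ℝ (log ∘ Gamma) x :=
    (differentiableAt_Gamma_of_pos hx).log (Gamma_pos_of_pos hx).ne'
  rw [digamma_eq_deriv_log_Gamma (by linarith), digamma_eq_deriv_log_Gamma hx,
    ← deriv_comp_add_const, one_div, ← deriv_log, ← deriv_add hdiff (differentiableAt_log hx.ne')]
  refine Filter.EventuallyEq.deriv_eq ?_
  filter_upwards [eventually_gt_nhds hx] with y hy
  simp only [Function.comp_apply, Gamma_add_one hy.ne',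
    log_mul hy.ne' (Gamma_pos_of_pos hy).ne', add_comm]
  rfl

lemma digamma_add_nat {x : ℝ} (hx : 0 < x) (n : ℕ) :
    digamma (x + n) = digamma x + ∑ k ∈ Finset.range n, 1 / (x + k) := by
  induction n with
  | zero => simp
  | succ n ih =>
    rw [Nat.cast_succ, ← add_assoc, digamma_add_one (by positivity), ih, Finset.sum_range_succ,
      add_assoc]

lemma digamma_nat_add_one (n : ℕ) : digamma (n + 1) = -eulerMascheroniConstant + harmonic n := by
  rw [digamma, deriv_Gamma_nat, Gamma_nat_eq_factorial, mul_div_cancel_left₀]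
  exact_mod_cast n.factorial_ne_zero

lemma harmonic_add_sub_harmonic_le (n m : ℕ) :
    (harmonic (n + m) : ℝ) - harmonic n ≤ m / (n + 1) := by
  induction m with
  | zero => simp
  | succ m ih =>
    have hstep : ((n + m + 1 : ℕ) : ℝ)⁻¹ ≤ 1 / (n + 1) := by
      rw [one_div]
      gcongr
      exact_mod_cast (by omega : n + 1 ≤ n + m + 1)
    rw [← add_assoc, harmonic_succ]
    push_cast at hstep ⊢
    rw [add_div, one_div] at *
    linarith

lemma tendsto_digamma_add_nat_sub_harmonic {x : ℝ} (hx : 0 ≤ x) :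
    Tendsto (fun n : ℕ => digamma (x + 1 + n) - harmonic n) atTop
      (𝓝 (-eulerMascheroniConstant)) := by
  set m := ⌈x⌉₊
  have hbounds (n : ℕ) : -eulerMascheroniConstant ≤ digamma (x + 1 + n) - harmonic n ∧
      digamma (x + 1 + n) - harmonic n ≤ -eulerMascheroniConstant + m / (n + 1) := by
    have hlow := digamma_nat_add_one n ▸
      digamma_monotoneOn (by simp; positivity) (by simp; positivity)
        (by linarith : (n : ℝ) + 1 ≤ x + 1 + n)
    have hup := digamma_nat_add_one (n + m) ▸
      digamma_monotoneOn (by simp; positivity) (by simp; positivity)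
        (by push_cast; linarith [Nat.le_ceil x] : x + 1 + n ≤ ((n + m : ℕ) : ℝ) + 1)
    have := harmonic_add_sub_harmonic_le n m
    constructor <;> linarith
  have hdecay : Tendsto (fun n : ℕ => (m : ℝ) / (n + 1)) atTop (𝓝 0) := by
    simpa [div_eq_mul_inv] using tendsto_one_div_add_atTop_nhds_zero_nat.const_mul (m : ℝ)
  refine tendsto_of_tendsto_of_tendsto_of_le_of_le tendsto_const_nhds ?_
    (fun n => (hbounds n).1) (fun n => (hbounds n).2)
  simpa using tendsto_const_nhds.add hdecay

lemma hasSum_digamma {x : ℝ} (hx : 0 ≤ x) :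
    HasSum (fun n : ℕ => 1 / ((n : ℝ) + 1) - 1 / ((n : ℝ) + 1 + x))
      (digamma (x + 1) + eulerMascheroniConstant) := by
  have hnonneg (n : ℕ) : 0 ≤ 1 / ((n : ℝ) + 1) - 1 / ((n : ℝ) + 1 + x) :=
    sub_nonneg.mpr (one_div_le_one_div_of_le (by positivity) (by linarith))
  have hpartial (n : ℕ) : ∑ k ∈ Finset.range n, (1 / ((k : ℝ) + 1) - 1 / ((k : ℝ) + 1 + x)) =
      digamma (x + 1) - (digamma (x + 1 + n) - harmonic n) := by
    rw [digamma_add_nat (by positivity), Finset.sum_sub_distrib, harmonic]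
    push_cast
    simp only [one_div, add_comm, add_left_comm]
    ring
  rw [hasSum_iff_tendsto_nat_of_nonneg hnonneg, funext hpartial]
  simpa only [sub_neg_eq_add] using
    tendsto_const_nhds.sub (tendsto_digamma_add_nat_sub_harmonic hx)

lemma hasSum_one_div_sub_one_div {x y : ℝ} (hx : 0 ≤ x) (hy : 0 ≤ y) :
    HasSum (fun n : ℕ => 1 / ((n : ℝ) + 1 + x) - 1 / ((n : ℝ) + 1 + y))
      (digamma (y + 1) - digamma (x + 1)) := by
  have h := (hasSum_digamma hy).sub (hasSum_digamma hx)
  rw [add_sub_add_right_eq_sub] at h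
  exact h.congr_fun fun n => by ring

noncomputable def betaDiffSummand (x : ℝ) (n : ℕ) : ℝ :=
  (1 - 3 * x) / ((n : ℝ) + 1 + x) + 2 * (1 + 6 * x) / ((n : ℝ) + 1 + 2 * x)
    - 3 * (1 + 3 * x) / ((n : ℝ) + 1 + 3 * x)

lemma betaDiffSummand_pos {x : ℝ} (hx : 0 < x) (n : ℕ) : 0 < betaDiffSummand x n := by
  have h : betaDiffSummand x n = x * (4 * ((n : ℝ) + 1) + 6 * ((n : ℝ) + 1) * x + 6 * x)
      / (((n : ℝ) + 1 + x) * ((n : ℝ) + 1 + 2 * x) * ((n : ℝ) + 1 + 3 * x)) := by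
    unfold betaDiffSummand
    field_simp
    ring
  rw [h]
  positivity

lemma hasSum_betaDiffSummand {x : ℝ} (hx : 0 ≤ x) :
    HasSum (betaDiffSummand x)
      ((1 - 3 * x) * (digamma (3 * x + 1) - digamma (x + 1))
        + 2 * (1 + 6 * x) * (digamma (3 * x + 1) - digamma (2 * x + 1))) := by
  have h3x : 0 ≤ 3 * x := by positivity
  refine (((hasSum_one_div_sub_one_div hx h3x).mul_left (1 - 3 * x)).add
    ((hasSum_one_div_sub_one_div (by positivity) h3x).mul_left (2 * (1 + 6 * x)))).congr_fun
    fun n => ?_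
  unfold betaDiffSummand
  ring

lemma beta2_one_div_sub_beta3_one_div {x : ℝ} (hx : 0 < x) :
    beta2 (1 / x) - beta3 (1 / x) = x ^ 2 / 2 *
      ((1 - 3 * x) * (digamma (3 * x + 1) - digamma (x + 1))
        + 2 * (1 + 6 * x) * (digamma (3 * x + 1) - digamma (2 * x + 1))) := by
  have h2 : (2 : ℝ) / (1 / x) = 2 * x := by field_simp
  have h3 : (3 : ℝ) / (1 / x) = 3 * x := by field_simp
  rw [beta2, beta3, one_div_one_div, h2, h3, digamma_add_one hx, digamma_add_one (by positivity),
    digamma_add_one (by positivity)]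
  field_simp
  ring

theorem beta2_sub_beta3 :
    (∀ x : ℝ, 0 < x → x < 1 →
      beta2 (1 / x) - beta3 (1 / x) =
        x ^ 2 / 2 * ∑' n : ℕ, ((1 - 3 * x) / ((n : ℝ) + 1 + x)
          + 2 * (1 + 6 * x) / ((n : ℝ) + 1 + 2 * x)
          - 3 * (1 + 3 * x) / ((n : ℝ) + 1 + 3 * x)) ∧
      0 < beta2 (1 / x) - beta3 (1 / x)) ∧
    ∀ ℓ : ℕ, 2 ≤ ℓ → beta3 (ℓ : ℝ) < beta2 (ℓ : ℝ) := by
  have hgap (x : ℝ) (hx : 0 < x) :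
      beta2 (1 / x) - beta3 (1 / x) = x ^ 2 / 2 * ∑' n, betaDiffSummand x n ∧
        0 < beta2 (1 / x) - beta3 (1 / x) := by
    have hsum := hasSum_betaDiffSummand hx.le
    have hpos := hasSum_lt (fun n => (betaDiffSummand_pos hx n).le) (betaDiffSummand_pos hx 0)
      hasSum_zero hsum
    rw [beta2_one_div_sub_beta3_one_div hx, hsum.tsum_eq]
    exact ⟨rfl, mul_pos (by positivity) hpos⟩
  refine ⟨fun x hx _ => hgap x hx, fun ℓ hℓ => ?_⟩
  simpa using (hgap (1 / ℓ) (by positivity)).2
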